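/- Let u, v ∈ ℍ^{n+1} be non-proportional null vectors and let z ∈ ℍ^{n+1} be a negative vector. Set η = ⟨u,z⟩⟨u,v⟩⁻¹⟨z,v⟩⟨z,z⟩⁻¹. Then the line-distance quantity d(u,v;z) = inf{ |⟨z,w⟩|²/(⟨z,z⟩⟨w,w⟩) : w = uλ + vμ, λ,μ ∈ ℍ, ⟨w,w⟩ < 0 } equals 2·Re(η). (Equivalently, cosh²(ρ(L_{uv},z)/2) = 2 Re(η), where ρ(L_{uv},z) is the Bergman distance from the point represented by z to the quaternionic line spanned by u and v.) -/

import Mathlib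

open scoped Quaternion

noncomputable section

/-- The quaternionic Hermitian form of signature (n,1) on ℍ^{n+1}:
`⟨z,w⟩ = w̄₁ z_{n+1} + Σ_{i=2}^n w̄ᵢ zᵢ + w̄_{n+1} z₁`. -/
noncomputable def herm {n : ℕ} (z w : Fin (n+1) → ℍ[ℝ]) : ℍ[ℝ] :=
  star (w 0) * z (Fin.last n)
    + ∑ i ∈ Finset.Ioo (0 : Fin (n+1)) (Fin.last n), star (w i) * z i
    + star (w (Fin.last n)) * z 0

/-- `w` is (right-)proportional to `z`: `w = zλ` for some `λ ∈ ℍ`. -/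
def Prp {n : ℕ} (z w : Fin (n+1) → ℍ[ℝ]) : Prop :=
  ∃ lam : ℍ[ℝ], w = fun i => z i * lam

/-- Right scalar multiplication on ℍ^{n+1}. -/
noncomputable def smulR {n : ℕ} (z : Fin (n+1) → ℍ[ℝ]) (lam : ℍ[ℝ]) :
    Fin (n+1) → ℍ[ℝ] := fun i => z i * lam

/-- The quaternionic triple product `⟨p₁,p₂,p₃⟩ = ⟨p₂,p₁⟩⟨p₃,p₂⟩⟨p₁,p₃⟩`. -/
noncomputable def tri {n : ℕ} (p₁ p₂ p₃ : Fin (n+1) → ℍ[ℝ]) : ℍ[ℝ] :=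
  herm p₂ p₁ * herm p₃ p₂ * herm p₁ p₃

/-- The quaternionic Cartan angular invariant
`𝔸(p₁,p₂,p₃) = arccos(Re(−⟨p₁,p₂,p₃⟩)/|⟨p₁,p₂,p₃⟩|)`. -/
noncomputable def cartan {n : ℕ} (p₁ p₂ p₃ : Fin (n+1) → ℍ[ℝ]) : ℝ :=
  Real.arccos ((-(tri p₁ p₂ p₃)).re / ‖tri p₁ p₂ p₃‖)

/-- The quaternionic cross-ratio `𝕏(p₁,p₂,p₃,p₄) = ⟨p₃,p₁⟩⟨p₃,p₂⟩⁻¹⟨p₄,p₂⟩⟨p₄,p₁⟩⁻¹`. -/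
noncomputable def crossX {n : ℕ} (p₁ p₂ p₃ p₄ : Fin (n+1) → ℍ[ℝ]) : ℍ[ℝ] :=
  herm p₃ p₁ * (herm p₃ p₂)⁻¹ * herm p₄ p₂ * (herm p₄ p₁)⁻¹

/-- The group Sp(n,1) of quaternionic matrices preserving the Hermitian form. -/
def SpGrp (n : ℕ) : Set (Matrix (Fin (n+1)) (Fin (n+1)) ℍ[ℝ]) :=
  {g | ∀ z w : Fin (n+1) → ℍ[ℝ], herm (g.mulVec z) (g.mulVec w) = herm z w}

/-- Similarity of quaternions: `b = μ a μ⁻¹` for some nonzero `μ`. -/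
def QSim (a b : ℍ[ℝ]) : Prop := ∃ mu : ℍ[ℝ], mu ≠ 0 ∧ b = mu * a * mu⁻¹

/-- `η(u,v,z) = ⟨u,z⟩⟨u,v⟩⁻¹⟨z,v⟩⟨z,z⟩⁻¹`. -/
noncomputable def etaq {n : ℕ} (u v z : Fin (n+1) → ℍ[ℝ]) : ℍ[ℝ] :=
  herm u z * (herm u v)⁻¹ * herm z v * (herm z z)⁻¹

/-- The line-distance quantity
`d(u,v;z) = inf { |⟨z,w⟩|²/(⟨z,z⟩⟨w,w⟩) : w = uλ + vμ, ⟨w,w⟩ < 0 }`;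
it equals `cosh²(ρ(L_{uv},z)/2)`. -/
noncomputable def lineDist {n : ℕ} (u v z : Fin (n+1) → ℍ[ℝ]) : ℝ :=
  sInf { x : ℝ | ∃ lam mu : ℍ[ℝ],
    (herm (fun i => u i * lam + v i * mu) (fun i => u i * lam + v i * mu)).re < 0 ∧
    x = ‖herm z (fun i => u i * lam + v i * mu)‖^2
        / ((herm z z).re *
           (herm (fun i => u i * lam + v i * mu) (fun i => u i * lam + v i * mu)).re) }

/-!
Write `w = uλ + vμ`. As `u, v` are null, `⟨w,w⟩ = 2 Re(μ̄⟨u,v⟩λ)` and `⟨z,w⟩ = λ̄⟨z,u⟩ + μ̄⟨z,v⟩`.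
With `Q = ⟨u,z⟩⟨u,v⟩⁻¹⟨z,v⟩`, so that `η = Q/⟨z,z⟩`, the elementary quaternion inequality
`4 Re(Q) Re(t Q⁻¹ s̄) ≤ |s + t|²` (Cauchy–Schwarz plus AM–GM) gives `|⟨z,w⟩|² ≥ 2 Re(Q) ⟨w,w⟩`,
i.e. every ratio is at least `2 Re η`. Equality holds at the orthogonal projection `p` of `z` onto
the line, for which `⟨p,p⟩ = ⟨z,p⟩ = 2 Re Q`.

Positivity does the rest: the orthogonal complement of a nonzero null vector is positive
semidefinite, with radical spanned by that vector. Hence `⟨u,v⟩ ≠ 0`, and since `z - p ⊥ u`,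
`0 ≤ ⟨z - p, z - p⟩ = ⟨z,z⟩ - 2 Re Q`, so `p` is a negative vector.
-/

namespace Quaternion

lemma abs_re_le_norm (a : ℍ[ℝ]) : |a.re| ≤ ‖a‖ := by
  simpa [inner_def] using abs_real_inner_le_norm a 1

lemma re_mul_mul_star (s a : ℍ[ℝ]) : (s * a * star s).re = ‖s‖ ^ 2 * a.re := by
  rw [sq, ← normSq_eq_norm_mul_self, normSq_def']
  simp only [re_mul, imI_mul, imJ_mul, imK_mul, re_star, imI_star, imJ_star, imK_star]
  ring

lemma four_mul_re_mul_re_mul_mul_star_le (F s t : ℍ[ℝ]) :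
    4 * F.re * (t * F * star s).re ≤ ‖F‖ ^ 2 * ‖s + t‖ ^ 2 := by
  have hsplit : (t * F * star s).re = ((s + t) * F * star s).re - ‖s‖ ^ 2 * F.re := by
    rw [add_mul, add_mul, re_add, re_mul_mul_star]; ring
  have hcs : |((s + t) * F * star s).re| ≤ ‖s + t‖ * ‖F‖ * ‖s‖ := by
    simpa only [norm_mul, norm_star] using abs_re_le_norm ((s + t) * F * star s)
  obtain ⟨hlo, hhi⟩ := abs_le.mp hcs
  rw [hsplit]
  rcases le_or_gt 0 F.re with hF | hF
  · nlinarith [sq_nonneg (‖F‖ * ‖s + t‖ - 2 * F.re * ‖s‖)]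
  · nlinarith [sq_nonneg (‖F‖ * ‖s + t‖ + 2 * F.re * ‖s‖)]

lemma four_mul_re_mul_re_mul_inv_mul_star_le (Q s t : ℍ[ℝ]) :
    4 * Q.re * (t * Q⁻¹ * star s).re ≤ ‖s + t‖ ^ 2 := by
  rcases eq_or_ne Q 0 with rfl | hQ
  · simp
  have hnQ : 0 < normSq Q := (normSq_nonneg).lt_of_ne' (normSq_ne_zero.mpr hQ)
  have h := four_mul_re_mul_re_mul_mul_star_le Q⁻¹ s t
  rw [inv_def, re_smul, re_star, smul_eq_mul, norm_smul, norm_star, mul_pow, Real.norm_eq_abs,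
    sq_abs, sq ‖Q‖, ← normSq_eq_norm_mul_self, ← inv_def] at h
  rw [show (normSq Q)⁻¹ ^ 2 * normSq Q = (normSq Q)⁻¹ by field_simp, mul_left_comm 4,
    mul_assoc, mul_assoc] at h
  simpa only [mul_assoc] using le_of_mul_le_mul_left h (inv_pos.mpr hnQ)

lemma four_mul_re_mul_re_le_norm_sq_add (A B C l m : ℍ[ℝ]) :
    4 * (star B * A⁻¹ * C).re * (star m * A * l).re ≤ ‖star l * B + star m * C‖ ^ 2 := by
  rcases eq_or_ne B 0 with rfl | hB
  · simp only [star_zero, zero_mul, re_zero, mul_zero]; positivity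
  rcases eq_or_ne C 0 with rfl | hC
  · simp only [mul_zero, re_zero, zero_mul]; positivity
  have h := four_mul_re_mul_re_mul_inv_mul_star_le (star B * A⁻¹ * C)
    (star l * B) (star m * C)
  have hsB : star B ≠ 0 := star_ne_zero.mpr hB
  rwa [show star m * C * (star B * A⁻¹ * C)⁻¹ * star (star l * B) = star m * A * l by
    simp only [mul_inv_rev, inv_inv, star_mul, star_star, mul_assoc, mul_inv_cancel_left₀ hC,
      inv_mul_cancel_left₀ hsB]] at h

end Quaternion

section HermitianForm

variable {n : ℕ}

lemma star_herm (z w : Fin (n+1) → ℍ[ℝ]) : star (herm z w) = herm w z := by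
  simp only [herm, star_add, star_mul, star_star, star_sum]
  abel

lemma herm_self_eq_coe_re (z : Fin (n+1) → ℍ[ℝ]) : herm z z = ((herm z z).re : ℍ[ℝ]) :=
  Quaternion.star_eq_self.mp (star_herm z z)

lemma herm_add_left (x y w : Fin (n+1) → ℍ[ℝ]) : herm (x + y) w = herm x w + herm y w := by
  simp only [herm, Pi.add_apply, mul_add, Finset.sum_add_distrib]
  abel

lemma herm_add_right (z x y : Fin (n+1) → ℍ[ℝ]) : herm z (x + y) = herm z x + herm z y := by
  simp only [herm, Pi.add_apply, star_add, add_mul, Finset.sum_add_distrib]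
  abel

lemma herm_sub_left (x y w : Fin (n+1) → ℍ[ℝ]) : herm (x - y) w = herm x w - herm y w := by
  simp only [herm, Pi.sub_apply, mul_sub, Finset.sum_sub_distrib]
  abel

lemma herm_sub_right (z x y : Fin (n+1) → ℍ[ℝ]) : herm z (x - y) = herm z x - herm z y := by
  simp only [herm, Pi.sub_apply, star_sub, sub_mul, Finset.sum_sub_distrib]
  abel

lemma herm_smulR_left (x w : Fin (n+1) → ℍ[ℝ]) (c : ℍ[ℝ]) :
    herm (smulR x c) w = herm x w * c := by
  simp only [herm, smulR, add_mul, Finset.sum_mul, mul_assoc]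

lemma herm_smulR_right (z x : Fin (n+1) → ℍ[ℝ]) (c : ℍ[ℝ]) :
    herm z (smulR x c) = star c * herm z x := by
  simp only [herm, smulR, star_mul, mul_add, Finset.mul_sum, mul_assoc]

end HermitianForm

section NullVectors

variable {n : ℕ}

lemma herm_self_re_eq_sum_normSq {w : Fin (n+1) → ℍ[ℝ]} (hw : w 0 = 0) :
    (herm w w).re = ∑ i ∈ Finset.Ioo 0 (Fin.last n), Quaternion.normSq (w i) := by
  simp only [herm, hw, star_zero, zero_mul, mul_zero, add_zero, zero_add, Quaternion.star_mul_self]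
  exact map_sum (QuaternionAlgebra.reₗ _ _ _) _ _

lemma apply_eq_zero_of_herm_self_eq_zero {w : Fin (n+1) → ℍ[ℝ]} (hw : w 0 = 0)
    (hww : herm w w = 0) {i : Fin (n+1)} (hi : i ≠ Fin.last n) : w i = 0 := by
  rcases eq_or_ne i 0 with rfl | hi0
  · exact hw
  have hsum : ∑ j ∈ Finset.Ioo 0 (Fin.last n), Quaternion.normSq (w j) = 0 := by
    rw [← herm_self_re_eq_sum_normSq hw, hww, Quaternion.re_zero]
  have hmem : i ∈ Finset.Ioo 0 (Fin.last n) :=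
    Finset.mem_Ioo.mpr ⟨Fin.pos_iff_ne_zero.mpr hi0, (Fin.le_last i).lt_of_ne hi⟩
  exact Quaternion.normSq_eq_zero.mp
    ((Finset.sum_eq_zero_iff_of_nonneg fun _ _ => Quaternion.normSq_nonneg).mp hsum i hmem)

lemma apply_last_ne_zero {u : Fin (n+1) → ℍ[ℝ]} (hu : u ≠ 0)
    (hu' : ∀ i ≠ Fin.last n, u i = 0) : u (Fin.last n) ≠ 0 := by
  refine fun h => hu (funext fun i => ?_)
  by_cases hi : i = Fin.last n
  · rw [hi, h, Pi.zero_apply]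
  · exact hu' i hi

lemma herm_eq_of_forall_ne_last {y : Fin (n+1) → ℍ[ℝ]} (hy0 : y 0 = 0)
    (hy : ∀ i ≠ Fin.last n, y i = 0) (x : Fin (n+1) → ℍ[ℝ]) :
    herm x y = star (y (Fin.last n)) * x 0 := by
  rw [herm, hy0, Finset.sum_eq_zero fun i hi => by
    rw [hy i (Finset.mem_Ioo.mp hi).2.ne, star_zero, zero_mul]]
  simp

lemma prp_of_forall_ne_last {u w : Fin (n+1) → ℍ[ℝ]} (hu : u ≠ 0)
    (hu' : ∀ i ≠ Fin.last n, u i = 0) (hw : ∀ i ≠ Fin.last n, w i = 0) : Prp u w := by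
  refine ⟨(u (Fin.last n))⁻¹ * w (Fin.last n), funext fun i => ?_⟩
  by_cases hi : i = Fin.last n
  · rw [hi, mul_inv_cancel_left₀ (apply_last_ne_zero hu hu')]
  · rw [hw i hi, hu' i hi, zero_mul]

variable {u w : Fin (n+1) → ℍ[ℝ]}

lemma exists_sub_smulR_apply_zero (hu : u ≠ 0) (huu : herm u u = 0) (hwu : herm w u = 0) :
    ∃ c, (w - smulR u c) 0 = 0 := by
  by_cases hu0 : u 0 = 0
  · have hu' : ∀ i ≠ Fin.last n, u i = 0 := fun i hi =>
      apply_eq_zero_of_herm_self_eq_zero hu0 huu hi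
    rw [herm_eq_of_forall_ne_last hu0 hu' w] at hwu
    refine ⟨0, ?_⟩
    simp [smulR, (mul_eq_zero.mp hwu).resolve_left (star_ne_zero.mpr (apply_last_ne_zero hu hu'))]
  · exact ⟨(u 0)⁻¹ * w 0, by simp [smulR, mul_inv_cancel_left₀ hu0]⟩

lemma herm_sub_smulR_self (huu : herm u u = 0) (hwu : herm w u = 0) (c : ℍ[ℝ]) :
    herm (w - smulR u c) (w - smulR u c) = herm w w := by
  have huw : herm u w = 0 := by rw [← star_herm, hwu, star_zero]
  simp [herm_sub_left, herm_sub_right, herm_smulR_left, herm_smulR_right, huu, hwu, huw]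

lemma herm_self_re_nonneg_of_herm_eq_zero (hu : u ≠ 0) (huu : herm u u = 0)
    (hwu : herm w u = 0) : 0 ≤ (herm w w).re := by
  -- shifting `w` along `u` kills its first coordinate, and then the form is a sum of squares
  obtain ⟨c, hc⟩ := exists_sub_smulR_apply_zero hu huu hwu
  rw [← herm_sub_smulR_self huu hwu c, herm_self_re_eq_sum_normSq hc]
  exact Finset.sum_nonneg fun _ _ => Quaternion.normSq_nonneg

lemma prp_of_herm_eq_zero (hu : u ≠ 0) (huu : herm u u = 0) (hwu : herm w u = 0)
    (hww : herm w w = 0) : Prp u w := by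
  obtain ⟨c, hc⟩ := exists_sub_smulR_apply_zero hu huu hwu
  set w' := w - smulR u c with hw'
  have hw'mid : ∀ i ≠ Fin.last n, w' i = 0 := fun i hi =>
    apply_eq_zero_of_herm_self_eq_zero hc (by rw [herm_sub_smulR_self huu hwu, hww]) hi
  suffices hw'u : Prp u w' by
    obtain ⟨d, hd⟩ := hw'u
    exact ⟨d + c, funext fun i => by rw [mul_add, ← congrFun hd i, hw']; simp [smulR]⟩
  by_cases hu0 : u 0 = 0
  · exact prp_of_forall_ne_last hu (fun i hi => apply_eq_zero_of_herm_self_eq_zero hu0 huu hi)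
      hw'mid
  · have huw' : herm u w' = 0 := by
      rw [← star_herm, hw', herm_sub_left, herm_smulR_left, hwu, huu, zero_mul, sub_zero,
        star_zero]
    rw [herm_eq_of_forall_ne_last hc hw'mid] at huw'
    have hlast : w' (Fin.last n) = 0 := star_eq_zero.mp ((mul_eq_zero.mp huw').resolve_right hu0)
    refine ⟨0, funext fun i => ?_⟩
    by_cases hi : i = Fin.last n
    · rw [hi, hlast, mul_zero]
    · rw [hw'mid i hi, mul_zero]

lemma herm_ne_zero_of_not_prp {v : Fin (n+1) → ℍ[ℝ]} (hu : u ≠ 0) (huu : herm u u = 0)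
    (hvv : herm v v = 0) (hprop : ¬ Prp u v) : herm u v ≠ 0 := fun h =>
  hprop (prp_of_herm_eq_zero hu huu (by rw [← star_herm, h, star_zero]) hvv)

end NullVectors

section Line

variable {n : ℕ}

def coshSqHalfDist (z w : Fin (n+1) → ℍ[ℝ]) : ℝ :=
  ‖herm z w‖ ^ 2 / ((herm z z).re * (herm w w).re)

def lineProj (u v z : Fin (n+1) → ℍ[ℝ]) : Fin (n+1) → ℍ[ℝ] :=
  smulR u ((herm u v)⁻¹ * herm z v) + smulR v ((herm v u)⁻¹ * herm z u)

variable {u v z : Fin (n+1) → ℍ[ℝ]}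

lemma re_etaq : (etaq u v z).re = (herm u z * (herm u v)⁻¹ * herm z v).re / (herm z z).re := by
  rw [etaq, herm_self_eq_coe_re z, ← Quaternion.coe_inv, Quaternion.mul_coe_eq_smul,
    Quaternion.re_smul, smul_eq_mul, Quaternion.re_coe, inv_mul_eq_div]

lemma herm_smulR_add_smulR_self_re (huu : herm u u = 0) (hvv : herm v v = 0) (l m : ℍ[ℝ]) :
    (herm (smulR u l + smulR v m) (smulR u l + smulR v m)).re
      = 2 * (star m * herm u v * l).re := by
  have hconj : star l * star (herm u v) * m = star (star m * herm u v * l) := by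
    simp only [star_mul, star_star, mul_assoc]
  simp only [herm_add_left, herm_add_right, herm_smulR_left, herm_smulR_right, huu, hvv,
    ← star_herm u v, zero_mul, zero_add, add_zero, ← mul_assoc]
  rw [Quaternion.re_add, hconj, Quaternion.re_star, two_mul]

lemma herm_lineProj_left (huu : herm u u = 0) (hvv : herm v v = 0) (hA : herm u v ≠ 0) :
    herm (lineProj u v z) u = herm z u ∧ herm (lineProj u v z) v = herm z v := by
  have hA' : herm v u ≠ 0 := by rwa [← star_herm, star_ne_zero]
  simp [lineProj, herm_add_left, herm_smulR_left, huu, hvv, mul_inv_cancel_left₀ hA,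
    mul_inv_cancel_left₀ hA']

lemma herm_lineProj_right (x : Fin (n+1) → ℍ[ℝ]) :
    herm x (lineProj u v z)
      = star ((herm u v)⁻¹ * herm z v) * herm x u + star ((herm v u)⁻¹ * herm z u) * herm x v := by
  rw [lineProj, herm_add_right, herm_smulR_right, herm_smulR_right]

lemma herm_lineProj :
    herm z (lineProj u v z) = ((2 * (herm u z * (herm u v)⁻¹ * herm z v).re : ℝ) : ℍ[ℝ]) := by
  rw [← Quaternion.star_add_self', herm_lineProj_right]
  simp only [star_mul, star_inv₀, star_herm, mul_assoc]

lemma herm_lineProj_self (huu : herm u u = 0) (hvv : herm v v = 0) (hA : herm u v ≠ 0) :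
    herm (lineProj u v z) (lineProj u v z) = herm z (lineProj u v z) := by
  obtain ⟨hpu, hpv⟩ := herm_lineProj_left (z := z) huu hvv hA
  rw [herm_lineProj_right, hpu, hpv, herm_lineProj_right]

lemma two_mul_re_le_herm_self (hu : u ≠ 0) (huu : herm u u = 0) (hvv : herm v v = 0)
    (hA : herm u v ≠ 0) : 2 * (herm u z * (herm u v)⁻¹ * herm z v).re ≤ (herm z z).re := by
  have horth : herm (z - lineProj u v z) u = 0 := by
    rw [herm_sub_left, (herm_lineProj_left huu hvv hA).1, sub_self]
  have h := herm_self_re_nonneg_of_herm_eq_zero hu huu horth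
  rw [herm_sub_left, herm_sub_right, herm_sub_right, herm_lineProj_self huu hvv hA,
    ← star_herm z (lineProj u v z), herm_lineProj, Quaternion.star_coe] at h
  simpa using h

lemma two_mul_re_div_le_coshSqHalfDist (huu : herm u u = 0) (hvv : herm v v = 0)
    (hz : (herm z z).re < 0) (l m : ℍ[ℝ])
    (hw : (herm (smulR u l + smulR v m) (smulR u l + smulR v m)).re < 0) :
    2 * (herm u z * (herm u v)⁻¹ * herm z v).re / (herm z z).re
      ≤ coshSqHalfDist z (smulR u l + smulR v m) := by
  have key := Quaternion.four_mul_re_mul_re_le_norm_sq_add (herm u v) (herm z u) (herm z v) l m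
  rw [star_herm] at key
  rw [coshSqHalfDist, herm_add_right, herm_smulR_right, herm_smulR_right,
    le_div_iff₀ (mul_pos_of_neg_of_neg hz hw)]
  calc 2 * (herm u z * (herm u v)⁻¹ * herm z v).re / (herm z z).re
        * ((herm z z).re * (herm (smulR u l + smulR v m) (smulR u l + smulR v m)).re)
      = 2 * (herm u z * (herm u v)⁻¹ * herm z v).re
        * (herm (smulR u l + smulR v m) (smulR u l + smulR v m)).re := by
        field_simp [hz.ne]
    _ ≤ _ := by rw [herm_smulR_add_smulR_self_re huu hvv]; linarith

end Line

theorem stmt9_general {n : ℕ} (u v z : Fin (n+1) → ℍ[ℝ])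
    (hu : u ≠ 0) (huu : herm u u = 0) (hvv : herm v v = 0)
    (hprop : ¬ Prp u v) (hz : (herm z z).re < 0) :
    lineDist u v z = 2 * (etaq u v z).re := by
  have hA := herm_ne_zero_of_not_prp hu huu hvv hprop
  have hKr := two_mul_re_le_herm_self (z := z) hu huu hvv hA
  set K := (herm u z * (herm u v)⁻¹ * herm z v).re
  have hpp : (herm (lineProj u v z) (lineProj u v z)).re = 2 * K := by
    rw [herm_lineProj_self huu hvv hA, herm_lineProj, Quaternion.re_coe]
  rw [re_etaq, ← mul_div_assoc]
  refine IsLeast.csInf_eq ⟨⟨(herm u v)⁻¹ * herm z v, (herm v u)⁻¹ * herm z u, ?_, ?_⟩, ?_⟩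
  · change (herm (lineProj u v z) (lineProj u v z)).re < 0
    linarith
  · change _ = coshSqHalfDist z (lineProj u v z)
    rw [coshSqHalfDist, hpp, herm_lineProj, Quaternion.norm_coe, Real.norm_eq_abs, sq_abs]
    field_simp [show K ≠ 0 by linarith]
    ring
  · rintro x ⟨l, m, hw, rfl⟩
    exact two_mul_re_div_le_coshSqHalfDist huu hvv hz l m hw

/-- for non-proportional null `u,v` and negative `z`,
`d(u,v;z) = 2 Re(η)` where `η = ⟨u,z⟩⟨u,v⟩⁻¹⟨z,v⟩⟨z,z⟩⁻¹`. -/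
theorem stmt9 {n : ℕ} (hn : 2 ≤ n) (u v z : Fin (n+1) → ℍ[ℝ])
    (hu : u ≠ 0) (hv : v ≠ 0) (huu : herm u u = 0) (hvv : herm v v = 0)
    (hprop : ¬ Prp u v) (hz : (herm z z).re < 0) :
    lineDist u v z = 2 * (etaq u v z).re :=
  stmt9_general u v z hu huu hvv hprop hz
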